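/- Fix a real constant b and define f(a) = ∫_{-∞}^{+∞} Φ(a + bx) φ(x) dx. Then f is differentiable at every a ∈ ℝ with derivative f′(a) = (1/(√(2π)√(1+b²))) e^{-a²/(2(1+b²))}. -/

import Mathlib

open MeasureTheory Real

/-- The density of the standard normal distribution. -/
noncomputable def stdGaussianPDF (x : ℝ) : ℝ :=
  (Real.sqrt (2 * Real.pi))⁻¹ * Real.exp (-x ^ 2 / 2)

/-- The cumulative distribution function of the standard normal distribution. -/
noncomputable def stdGaussianCDF (x : ℝ) : ℝ :=
  ∫ t in Set.Iic x, stdGaussianPDF t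

/-!
Differentiate under the integral sign: `Φ' = φ` is bounded and `φ` is integrable, so
`f'(a) = ∫ φ(a + bx) φ(x) dx`. Completing the square in `x`, the integrand is
`φ(a / √(1 + b²)) / √(2π)` times an unnormalized Gaussian of precision `1 + b²`, whose
integral is `√(2π / (1 + b²))`.
-/

open ProbabilityTheory Set

lemma stdGaussianPDF_eq_gaussianPDFReal : stdGaussianPDF = gaussianPDFReal 0 1 := by
  ext x
  simp [stdGaussianPDF, gaussianPDFReal]

lemma continuous_stdGaussianPDF : Continuous stdGaussianPDF := by
  unfold stdGaussianPDF
  fun_prop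

lemma stdGaussianPDF_nonneg (x : ℝ) : 0 ≤ stdGaussianPDF x := by
  unfold stdGaussianPDF
  positivity

lemma abs_stdGaussianPDF_le (x : ℝ) : |stdGaussianPDF x| ≤ (√(2 * π))⁻¹ := by
  rw [abs_of_nonneg (stdGaussianPDF_nonneg x), stdGaussianPDF]
  refine mul_le_of_le_one_right (by positivity) (exp_le_one_iff.2 ?_)
  nlinarith [sq_nonneg x]

lemma integrable_stdGaussianPDF : Integrable stdGaussianPDF := by
  rw [stdGaussianPDF_eq_gaussianPDFReal]
  exact integrable_gaussianPDFReal 0 1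

lemma integral_stdGaussianPDF : ∫ x, stdGaussianPDF x = 1 := by
  rw [stdGaussianPDF_eq_gaussianPDFReal]
  exact integral_gaussianPDFReal_eq_one 0 one_ne_zero

lemma abs_stdGaussianCDF_le_one (x : ℝ) : |stdGaussianCDF x| ≤ 1 := by
  have hnonneg : 0 ≤ stdGaussianCDF x :=
    setIntegral_nonneg measurableSet_Iic fun t _ => stdGaussianPDF_nonneg t
  rw [abs_of_nonneg hnonneg, ← integral_stdGaussianPDF]
  exact setIntegral_le_integral integrable_stdGaussianPDF
    (Filter.Eventually.of_forall stdGaussianPDF_nonneg)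

lemma hasDerivAt_setIntegral_Iic {E : Type*} [NormedAddCommGroup E] [NormedSpace ℝ E]
    [CompleteSpace E] {f : ℝ → E} (hf : Integrable f) {x : ℝ} (hfx : ContinuousAt f x) :
    HasDerivAt (fun y => ∫ t in Iic y, f t) (f x) x := by
  have hsplit : (fun y => ∫ t in Iic y, f t) =
      fun y => (∫ t in Iic 0, f t) + ∫ t in (0 : ℝ)..y, f t := by
    funext y
    rw [← intervalIntegral.integral_Iic_sub_Iic hf.integrableOn hf.integrableOn, add_sub_cancel]
  rw [hsplit]
  exact (intervalIntegral.integral_hasDerivAt_right hf.intervalIntegrable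
    hf.aestronglyMeasurable.stronglyMeasurableAtFilter hfx).const_add _

lemma hasDerivAt_stdGaussianCDF (x : ℝ) : HasDerivAt stdGaussianCDF (stdGaussianPDF x) x :=
  hasDerivAt_setIntegral_Iic integrable_stdGaussianPDF continuous_stdGaussianPDF.continuousAt

lemma hasDerivAt_integral_comp_add_mul_mul {G g w : ℝ → ℝ} {C D : ℝ}
    (hG : ∀ y, HasDerivAt G (g y) y) (hG_le : ∀ y, |G y| ≤ C)
    (hg : Continuous g) (hg_le : ∀ y, |g y| ≤ D) (hw : Integrable w) (b a : ℝ) :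
    HasDerivAt (fun a => ∫ x, G (a + b * x) * w x) (∫ x, g (a + b * x) * w x) a := by
  have hG_cont : Continuous G := continuous_iff_continuousAt.2 fun y => (hG y).continuousAt
  have haffine (a' : ℝ) : Continuous fun x : ℝ => a' + b * x := by fun_prop
  have hmeas (a' : ℝ) : AEStronglyMeasurable (fun x => G (a' + b * x) * w x) :=
    (hG_cont.comp (haffine a')).aestronglyMeasurable.mul hw.aestronglyMeasurable
  refine (hasDerivAt_integral_of_dominated_loc_of_deriv_le (F' := fun a' x => g (a' + b * x) * w x)
    (bound := fun x => D * ‖w x‖)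
    Filter.univ_mem (Filter.Eventually.of_forall hmeas)
    (hw.bdd_mul (hG_cont.comp (haffine a)).aestronglyMeasurable
      (Filter.Eventually.of_forall fun x => hG_le _))
    ((hg.comp (haffine a)).aestronglyMeasurable.mul hw.aestronglyMeasurable)
    (Filter.Eventually.of_forall fun x a' _ => ?_) (hw.norm.const_mul D)
    (Filter.Eventually.of_forall fun x a' _ => ?_)).2
  · rw [norm_mul]
    exact mul_le_mul_of_nonneg_right (hg_le _) (norm_nonneg _)
  · simpa using ((hG (a' + b * x)).comp a' ((hasDerivAt_id a').add_const (b * x))).mul_const (w x)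

lemma stdGaussianPDF_add_mul_mul_stdGaussianPDF (a b x : ℝ) :
    stdGaussianPDF (a + b * x) * stdGaussianPDF x =
      ((√(2 * π))⁻¹ * (√(2 * π))⁻¹ * exp (-a ^ 2 / (2 * (1 + b ^ 2)))) *
        exp (-((1 + b ^ 2) / 2) * (x + a * b / (1 + b ^ 2)) ^ 2) := by
  have hs : 1 + b ^ 2 ≠ 0 := by positivity
  have hsquare : -(a + b * x) ^ 2 / 2 + -x ^ 2 / 2 =
      -a ^ 2 / (2 * (1 + b ^ 2)) + -((1 + b ^ 2) / 2) * (x + a * b / (1 + b ^ 2)) ^ 2 := by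
    field_simp
    ring
  rw [stdGaussianPDF, stdGaussianPDF, mul_mul_mul_comm, ← exp_add, hsquare, exp_add]
  ring

lemma integral_stdGaussianPDF_add_mul_mul_stdGaussianPDF (a b : ℝ) :
    ∫ x, stdGaussianPDF (a + b * x) * stdGaussianPDF x =
      (√(2 * π) * √(1 + b ^ 2))⁻¹ * exp (-a ^ 2 / (2 * (1 + b ^ 2))) := by
  have hs : 0 < 1 + b ^ 2 := by positivity
  have hgauss : ∫ x, exp (-((1 + b ^ 2) / 2) * (x + a * b / (1 + b ^ 2)) ^ 2) =
      √(2 * π) / √(1 + b ^ 2) := by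
    rw [integral_add_right_eq_self (fun x => exp (-((1 + b ^ 2) / 2) * x ^ 2)),
      integral_gaussian, div_div_eq_mul_div, mul_comm π 2, sqrt_div (by positivity)]
  simp_rw [stdGaussianPDF_add_mul_mul_stdGaussianPDF]
  rw [integral_const_mul, hgauss]
  field_simp [(sqrt_pos.2 hs).ne']

/-- `f(a) = ∫ Φ(a + bx) φ(x) dx` is differentiable with
`f′(a) = (1/(√(2π)√(1+b²))) e^{-a²/(2(1+b²))}`. -/
theorem hasDerivAt_integral_stdGaussianCDF_affine (b : ℝ) (a : ℝ) :
    HasDerivAt (fun a : ℝ => ∫ x, stdGaussianCDF (a + b * x) * stdGaussianPDF x)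
      ((Real.sqrt (2 * Real.pi) * Real.sqrt (1 + b ^ 2))⁻¹
        * Real.exp (-a ^ 2 / (2 * (1 + b ^ 2)))) a := by
  rw [← integral_stdGaussianPDF_add_mul_mul_stdGaussianPDF]
  exact hasDerivAt_integral_comp_add_mul_mul hasDerivAt_stdGaussianCDF abs_stdGaussianCDF_le_one
    continuous_stdGaussianPDF abs_stdGaussianPDF_le integrable_stdGaussianPDF b a
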